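/- arXiv:1901.10840 — 7 statements merged into one kernel-verified Lean document; each statement's English description precedes it below -/
import Mathlib

section
/- For w ∈ (0, π), the series ∑_{ℓ=1}^∞ (2ℓ+1)/(ℓ(ℓ+1)) · sin((2ℓ+1)w/2)/sin(w/2) converges and equals (π − w)·cot(w/2) − 1. -/
/-!
With `(2ℓ+1)/(ℓ(ℓ+1)) = 1/ℓ + 1/(ℓ+1)` and `sin ((2k+1)w/2) + sin ((2k-1)w/2) = 2 cos (w/2) sin (k w)`,
summation by parts writes the numerator of the `N`-th partial sum as
`2 cos (w/2) ∑_{k ≤ N} sin (k w)/k - sin (w/2) + O(1/N)`.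
The sawtooth series `∑ sin (k w)/k` is the imaginary part of `∑ zᵏ/k` at `z = e^{iw}`: this series
converges by Dirichlet's test, so by Abel's limit theorem its sum is `-log (1 - e^{iw})`, and
`1 - e^{iw} = 2 sin (w/2) e^{i(w-π)/2}` gives the imaginary part `(π - w)/2`.
-/

open Real Filter Finset Topology

lemma sin_half_pos {w : ℝ} (hw : w ∈ Set.Ioo 0 (2 * π)) : 0 < Real.sin (w / 2) :=
  Real.sin_pos_of_pos_of_lt_pi (by linarith [hw.1]) (by linarith [hw.2])

namespace Complex

lemma re_lt_one_of_norm_le_one {z : ℂ} (hz : ‖z‖ ≤ 1) (hz1 : z ≠ 1) : z.re < 1 := by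
  by_cases him : z.im = 0
  · have hz_re : z = z.re := ext rfl (by simp [him])
    rw [hz_re, norm_real, Real.norm_eq_abs] at hz
    refine lt_of_le_of_ne (le_of_abs_le hz) fun h ↦ hz1 ?_
    rw [hz_re, h, ofReal_one]
  · exact (le_abs_self _).trans_lt ((abs_re_lt_norm.2 him).trans_le hz)

lemma norm_sum_range_pow_succ_le {z : ℂ} (hz : ‖z‖ ≤ 1) (hz1 : z ≠ 1) (n : ℕ) :
    ‖∑ i ∈ range n, z ^ (i + 1)‖ ≤ 2 / ‖1 - z‖ := by
  have hsum : ∑ i ∈ range n, z ^ (i + 1) = z * (1 - z ^ n) / (1 - z) := by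
    rw [← geom_sum_mul_neg, ← mul_assoc, mul_div_cancel_right₀ _ (sub_ne_zero.2 hz1.symm), mul_sum]
    exact sum_congr rfl fun i _ ↦ pow_succ' z i
  have hnum : ‖z * (1 - z ^ n)‖ ≤ 2 := calc
    ‖z * (1 - z ^ n)‖ ≤ 1 * (1 + 1) := by
      rw [norm_mul]
      gcongr
      exact (norm_sub_le _ _).trans (by simpa using pow_le_one₀ (norm_nonneg z) hz)
    _ = 2 := by norm_num
  rw [hsum, norm_div]
  gcongr

lemma cauchySeq_sum_range_pow_div {z : ℂ} (hz : ‖z‖ ≤ 1) (hz1 : z ≠ 1) :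
    CauchySeq fun n ↦ ∑ i ∈ range n, z ^ i / i := by
  rw [← cauchySeq_shift 1]
  have hshift : (fun n ↦ ∑ i ∈ range (n + 1), z ^ i / i) =
      fun n ↦ ∑ i ∈ range n, (1 / ((i : ℝ) + 1)) • z ^ (i + 1) := by
    ext n
    rw [sum_range_succ']
    simp [div_eq_inv_mul]
  rw [hshift]
  refine Antitone.cauchySeq_series_mul_of_tendsto_zero_of_bounded (fun i j hij ↦ ?_)
    tendsto_one_div_add_atTop_nhds_zero_nat (norm_sum_range_pow_succ_le hz hz1)
  gcongr

lemma tendsto_sum_range_pow_div {z : ℂ} (hz : ‖z‖ ≤ 1) (hz1 : z ≠ 1) :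
    Tendsto (fun n ↦ ∑ i ∈ range n, z ^ i / i) atTop (𝓝 (-log (1 - z))) := by
  obtain ⟨l, hl⟩ := cauchySeq_tendsto_of_complete (cauchySeq_sum_range_pow_div hz hz1)
  suffices -log (1 - z) = l by rwa [this]
  have habel := tendsto_map'_iff.1 (tendsto_tsum_powerSeries_nhdsWithin_lt hl)
  have hdisc : ∀ r ∈ Set.Ioo (0 : ℝ) 1, ∑' n : ℕ, z ^ n / n * (r : ℂ) ^ n = -log (1 - r * z) := by
    intro r hr
    have hrz : ‖(r : ℂ) * z‖ < 1 := by
      rw [norm_mul, norm_real, Real.norm_of_nonneg hr.1.le]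
      exact mul_lt_one_of_nonneg_of_lt_one_left hr.1.le hr.2 hz
    rw [← (hasSum_taylorSeries_neg_log hrz).tsum_eq]
    exact tsum_congr fun n ↦ by ring
  have hslit : 1 - z ∈ slitPlane :=
    mem_slitPlane_iff.2 (Or.inl (by simpa using re_lt_one_of_norm_le_one hz hz1))
  have hcont : Tendsto (fun r : ℝ ↦ log (1 - r * z)) (𝓝 1) (𝓝 (log (1 - z))) := by
    have := (continuous_const.sub (continuous_ofReal.mul continuous_const)).continuousAt.clog
      (x := 1) (f := fun r : ℝ ↦ 1 - r * z) (by simpa using hslit)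
    simpa using this.tendsto
  refine tendsto_nhds_unique ((hcont.neg.mono_left nhdsWithin_le_nhds).congr' ?_) habel
  filter_upwards [Ioo_mem_nhdsLT zero_lt_one] with r hr
  exact (hdisc r hr).symm

lemma one_sub_exp_mul_I (w : ℝ) :
    1 - exp (w * I) = (2 * Real.sin (w / 2) : ℝ) * exp (((w - π) / 2 : ℝ) * I) := by
  set a := exp ((w / 2 : ℂ) * I) with ha_def
  have ha : a ≠ 0 := exp_ne_zero _
  have hsq : exp (w * I) = a ^ 2 := by rw [← exp_nat_mul]; push_cast; ring_nf
  have hinv : exp (-(w / 2 : ℂ) * I) = a⁻¹ := by rw [neg_mul, exp_neg]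
  have hshift : exp (((w - π) / 2 : ℂ) * I) = a * -I := by
    rw [show ((w - π) / 2 : ℂ) * I = (w / 2 : ℂ) * I + -π / 2 * I by ring, exp_add,
      exp_neg_pi_div_two_mul_I]
  push_cast
  rw [sin, hsq, hinv, hshift, ← ha_def]
  field_simp
  linear_combination (1 - a ^ 2) * I_sq

lemma log_one_sub_exp_mul_I {w : ℝ} (hw : w ∈ Set.Ioo 0 (2 * π)) :
    log (1 - exp (w * I)) = Real.log (2 * Real.sin (w / 2)) + ((w - π) / 2 : ℝ) * I := by
  rw [one_sub_exp_mul_I, log_ofReal_mul (by linarith [sin_half_pos hw]) (exp_ne_zero _),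
    log_exp] <;>
  simp only [mul_I_im, ofReal_re] <;> linarith [hw.1, hw.2, pi_pos]

lemma im_exp_mul_I_pow_div (w : ℝ) (k : ℕ) :
    (exp (w * I) ^ k / k).im = Real.sin (k * w) / k := by
  rw [← exp_nat_mul, show (k : ℂ) * (w * I) = (k * w : ℝ) * I by push_cast; ring,
    div_natCast_im, exp_ofReal_mul_I_im]

end Complex

lemma tendsto_sum_Icc_sin_mul_div {w : ℝ} (hw : w ∈ Set.Ioo 0 (2 * π)) :
    Tendsto (fun N : ℕ ↦ ∑ k ∈ Icc 1 N, Real.sin (k * w) / k) atTop (𝓝 ((π - w) / 2)) := by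
  have hz1 : Complex.exp (w * Complex.I) ≠ 1 := by
    rw [← sub_ne_zero, ← neg_sub, neg_ne_zero, Complex.one_sub_exp_mul_I]
    exact mul_ne_zero (by exact_mod_cast (by linarith [sin_half_pos hw])) (Complex.exp_ne_zero _)
  have hlim := (Complex.continuous_im.tendsto _).comp
    ((Complex.tendsto_sum_range_pow_div (Complex.norm_exp_ofReal_mul_I w).le hz1).comp
      (tendsto_add_atTop_nat 1))
  rw [Complex.neg_im, Complex.log_one_sub_exp_mul_I hw] at hlim
  convert hlim using 2 with N
  · rw [Function.comp_apply, Function.comp_apply, sum_range_eq_add_Ico _ N.add_one_pos,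
      Ico_add_one_right_eq_Icc, Nat.cast_zero, div_zero, zero_add, Complex.im_sum]
    exact sum_congr rfl fun k _ ↦ (Complex.im_exp_mul_I_pow_div w k).symm
  · simp only [Complex.add_im, Complex.ofReal_im, Complex.mul_I_im, Complex.ofReal_re]
    ring

lemma sum_Icc_two_mul_add_one_div_mul_sin (w : ℝ) (N : ℕ) :
    ∑ ℓ ∈ Icc 1 N, (2 * (ℓ : ℝ) + 1) / (ℓ * (ℓ + 1)) * Real.sin ((2 * ℓ + 1) * w / 2) =
      2 * Real.cos (w / 2) * ∑ k ∈ Icc 1 N, Real.sin (k * w) / k - Real.sin (w / 2) +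
        Real.sin ((2 * N + 1) * w / 2) / (N + 1) := by
  induction N with
  | zero => simp
  | succ n ih =>
    rw [sum_Icc_succ_top (by omega), sum_Icc_succ_top (by omega), ih]
    push_cast
    rw [show (2 * ((n : ℝ) + 1) + 1) * w / 2 = (n + 1) * w + w / 2 by ring,
      show (2 * (n : ℝ) + 1) * w / 2 = (n + 1) * w - w / 2 by ring, Real.sin_add, Real.sin_sub]
    field_simp
    ring

lemma tendsto_sin_div_nat_add_one (x : ℕ → ℝ) :
    Tendsto (fun N : ℕ ↦ Real.sin (x N) / (N + 1)) atTop (𝓝 0) := by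
  refine squeeze_zero_norm (fun N ↦ ?_) tendsto_one_div_add_atTop_nhds_zero_nat
  rw [norm_div, Real.norm_of_nonneg (by positivity : (0 : ℝ) ≤ N + 1)]
  gcongr
  exact Real.abs_sin_le_one _

theorem green_series_eq (w : ℝ) (hw : w ∈ Set.Ioo 0 π) :
    Tendsto (fun N : ℕ => ∑ ℓ ∈ Finset.Icc 1 N,
        (2 * (ℓ : ℝ) + 1) / (ℓ * (ℓ + 1)) * (Real.sin ((2 * ℓ + 1) * w / 2) / Real.sin (w / 2)))
      atTop (nhds ((π - w) * Real.cot (w / 2) - 1)) := by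
  have hw' : w ∈ Set.Ioo 0 (2 * π) := ⟨hw.1, by linarith [hw.2, pi_pos]⟩
  have hsin := (sin_half_pos hw').ne'
  have hlim := ((((tendsto_sum_Icc_sin_mul_div hw').const_mul (2 * Real.cos (w / 2))).sub_const
    (Real.sin (w / 2))).add (tendsto_sin_div_nat_add_one fun N ↦ (2 * N + 1) * w / 2)).div_const
    (Real.sin (w / 2))
  convert hlim using 2 with N
  · rw [← sum_Icc_two_mul_add_one_div_mul_sin, sum_div]
    exact sum_congr rfl fun ℓ _ ↦ (mul_div_assoc _ _ _).symm
  · rw [cot_eq_cos_div_sin]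
    field_simp
    ring
end

section
/- For natural numbers m ≤ n and all real x, U_m(x)·U_n(x) = ∑_{k=0}^{m} U_{n−m+2k}(x). -/
/-! Two-step induction on `m`. The step is the product formula `2 T_m U_n = U_{n+m} + U_{n-m}`
(the analogue of `T_mul_T`): since `U_{m+2} = 2 T_{m+2} + U_m`, passing from `m` to `m + 2`
adds exactly the two new end terms `U_{n+m+2}` and `U_{n-m-2}` of the sum. -/

open Polynomial

namespace Polynomial.Chebyshev

variable (R : Type*) [CommRing R]

theorem two_mul_T_mul_U (m n : ℤ) : 2 * T R m * U R n = U R (n + m) + U R (n - m) := by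
  induction m using Polynomial.Chebyshev.induct with
  | zero => simp [two_mul]
  | one => rw [T_one, U_add_one]; ring
  | add_two m ih1 ih2 =>
    have h₁ := U_add_two R (n + m)
    have h₂ := U_sub_two R (n - m)
    have h₃ := T_add_two R m
    linear_combination (norm := ring_nf) 2 * U R n * h₃ - h₂ - h₁ - ih2 + 2 * (X : R[X]) * ih1
  | neg_add_one m ih1 ih2 =>
    have h₁ := U_add_two R (n + (-m - 1))
    have h₂ := U_sub_two R (n - (-m - 1))
    have h₃ := T_add_two R (-m - 1)
    linear_combination (norm := ring_nf) 2 * U R n * h₃ - h₂ - h₁ - ih2 + 2 * (X : R[X]) * ih1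

theorem U_add_two_mul_U (m n : ℤ) :
    U R (m + 2) * U R n = U R m * U R n + U R (n + (m + 2)) + U R (n - (m + 2)) := by
  rw [U_eq_two_mul_T_add_U, add_mul, two_mul_T_mul_U]
  ring

theorem U_natCast_mul_U (m : ℕ) (n : ℤ) :
    U R m * U R n = ∑ k ∈ Finset.range (m + 1), U R (n - m + 2 * k) := by
  induction m using Nat.twoStepInduction generalizing n with
  | zero => simp
  | one => simp [Finset.sum_range_succ, U_one]
  | more m ih _ =>
    have shift (k : ℕ) : n - (m + 2) + 2 * ((k + 1 : ℕ) : ℤ) = n - m + 2 * k := by push_cast; ring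
    have top : n - m + 2 * ((m + 1 : ℕ) : ℤ) = n + (m + 2) := by push_cast; ring
    have bottom : n - (m + 2) + 2 * ((0 : ℕ) : ℤ) = n - (m + 2) := by simp
    push_cast
    rw [U_add_two_mul_U, ih, Finset.sum_range_succ' _ (m + 2), Finset.sum_range_succ _ (m + 1)]
    simp only [shift, top, bottom]

end Polynomial.Chebyshev

theorem chebyshevU_mul_general (m n : ℕ) (x : ℝ) :
    (Polynomial.Chebyshev.U ℝ m).eval x * (Polynomial.Chebyshev.U ℝ n).eval x
      = ∑ k ∈ Finset.range (m + 1), (Polynomial.Chebyshev.U ℝ ((n : ℤ) - m + 2 * k)).eval x := by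
  rw [← eval_mul, Polynomial.Chebyshev.U_natCast_mul_U, eval_finsetSum]

theorem chebyshevU_mul (m n : ℕ) (hmn : m ≤ n) (x : ℝ) :
    (Polynomial.Chebyshev.U ℝ m).eval x * (Polynomial.Chebyshev.U ℝ n).eval x
      = ∑ k ∈ Finset.range (m + 1), (Polynomial.Chebyshev.U ℝ ((n : ℤ) - m + 2 * k)).eval x :=
  chebyshevU_mul_general m n x
end

section
/- For every n ∈ ℕ, ∫₀¹ U_n(x)² dx = ∑_{k=0}^{n} 1/(2k+1) = (1/2)(ψ(n + 3/2) + γ + log 4), where ψ is the digamma function and γ the Euler–Mascheroni constant. -/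
/-!
The addition formula `U (m + k) = U m * U k - U (m - 1) * U (k - 1)` gives
`U (n + 1) ^ 2 - U n ^ 2 = U (2 n + 2)`, so `∫₀¹ U n ^ 2` telescopes into a sum of `∫₀¹ U (2 k)`.
Since `T' (2 k + 1) = (2 k + 1) U (2 k)`, `T (2 k + 1) 1 = 1` and `T (2 k + 1) 0 = 0`, each of these
integrals equals `1 / (2 k + 1)`. The digamma form follows from `ψ (x + 1) = ψ x + 1 / x` and
`ψ (1 / 2) = -γ - 2 log 2`.
-/

open Polynomial Real

/-- The digamma function `ψ(x) = d/dx log Γ(x)`. -/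
noncomputable def digamma (x : ℝ) : ℝ := deriv (fun y => Real.log (Real.Gamma y)) x

namespace Polynomial.Chebyshev

variable (R : Type*) [CommRing R]

theorem U_add (m k : ℤ) : U R (m + k) = U R m * U R k - U R (m - 1) * U R (k - 1) := by
  induction k using Polynomial.Chebyshev.induct with
  | zero => simp [U_neg_one]
  | one =>
    simp only [U_one, sub_self, U_zero, U_add_one]
    ring
  | add_two k ih1 ih2 =>
    linear_combination (norm := ring_nf) U_add_two R (m + k) + 2 * X * ih1 - ih2 -
      U R m * U_add_two R k + U R (m - 1) * U_add_one R k
  | neg_add_one k ih1 ih2 =>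
    linear_combination (norm := ring_nf) U_sub_one R (m - k) + 2 * X * ih1 - ih2 -
      U R m * U_sub_one R (-k) + U R (m - 1) * U_sub_two R (-k)

theorem U_sq_sub_U_sq (n : ℤ) : U R (n + 1) ^ 2 - U R n ^ 2 = U R (2 * n + 2) := by
  have h := U_add R (n + 1) (n + 1)
  rw [add_sub_cancel_right] at h
  rw [show 2 * n + 2 = n + 1 + (n + 1) by ring, h]
  ring

theorem integral_eval_U_two_mul (k : ℕ) :
    ∫ x in (0 : ℝ)..1, (U ℝ (2 * k)).eval x = 1 / (2 * k + 1) := by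
  have hT : derivative (T ℝ (2 * k + 1)) = Polynomial.C (2 * (k : ℝ) + 1) * U ℝ (2 * k) := by
    rw [T_derivative_eq_U, add_sub_cancel_right]
    simp [map_ofNat]
  have hFTC : ∫ x in (0 : ℝ)..1, (derivative (T ℝ (2 * k + 1))).eval x = 1 := by
    rw [intervalIntegral.integral_eq_sub_of_hasDerivAt (fun x _ => (T ℝ (2 * k + 1)).hasDerivAt x)
      ((Polynomial.continuous _).intervalIntegrable 0 1), T_eval_one,
      T_eval_zero_of_odd ℝ (odd_two_mul_add_one (k : ℤ)), sub_zero]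
  simp only [hT, eval_mul, eval_C, intervalIntegral.integral_const_mul] at hFTC
  rw [eq_div_iff (by positivity)]
  linarith

theorem integral_eval_U_sq (n : ℕ) :
    ∫ x in (0 : ℝ)..1, (U ℝ n).eval x ^ 2 = ∑ k ∈ Finset.range (n + 1), 1 / (2 * (k : ℝ) + 1) := by
  induction n with
  | zero => simp
  | succ n ih =>
    have hsq : ∀ x : ℝ, (U ℝ (n + 1 : ℕ)).eval x ^ 2 =
        (U ℝ n).eval x ^ 2 + (U ℝ (2 * (n + 1 : ℕ))).eval x := by
      intro x
      have h := congrArg (eval x) (U_sq_sub_U_sq ℝ n)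
      push_cast at h ⊢
      simp only [eval_sub, eval_pow] at h
      rw [show 2 * ((n : ℤ) + 1) = 2 * n + 2 by ring, ← h]
      ring
    simp_rw [hsq]
    rw [intervalIntegral.integral_add, ih, integral_eval_U_two_mul, Finset.sum_range_succ _ (n + 1)]
    · exact ((Polynomial.continuous _).pow 2).intervalIntegrable 0 1
    · exact (Polynomial.continuous _).intervalIntegrable 0 1

end Polynomial.Chebyshev

theorem digamma_add_one {x : ℝ} (hx : ∀ m : ℕ, x ≠ -m) : digamma (x + 1) = digamma x + x⁻¹ := by
  have hx0 : x ≠ 0 := by simpa using hx 0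
  have hΓ := differentiableAt_Gamma hx
  have hlogΓ : DifferentiableAt ℝ (fun y => log (Gamma y)) x := hΓ.log (Gamma_ne_zero hx)
  have hshift : (fun y => log (Gamma (y + 1))) =ᶠ[nhds x] fun y => log y + log (Gamma y) := by
    filter_upwards [eventually_ne_nhds hx0,
      hΓ.continuousAt.eventually_ne (Gamma_ne_zero hx)] with y hy hΓy
    rw [Gamma_add_one hy, log_mul hy hΓy]
  rw [digamma, ← deriv_comp_add_const, hshift.deriv_eq,
    deriv_fun_add (differentiableAt_log hx0) hlogΓ, deriv_log, add_comm, digamma]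

theorem digamma_one_half : digamma (1 / 2) = -eulerMascheroniConstant - 2 * log 2 := by
  have hΓ : Gamma (1 / 2) ≠ 0 := (Gamma_pos_of_pos one_half_pos).ne'
  rw [digamma, (hasDerivAt_Gamma_one_half.log hΓ).deriv, Gamma_one_half_eq]
  field_simp [(sqrt_pos.2 pi_pos).ne']
  ring

theorem digamma_nat_add_one_half (n : ℕ) :
    digamma (n + 1 / 2) = 2 * ∑ k ∈ Finset.range n, 1 / (2 * (k : ℝ) + 1)
      - eulerMascheroniConstant - log 4 := by
  induction n with
  | zero =>
    rw [show log 4 = 2 * log 2 by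
      rw [show (4 : ℝ) = 2 ^ 2 by norm_num, log_pow]; push_cast; ring]
    simp only [CharP.cast_eq_zero, zero_add, Finset.range_zero, Finset.sum_empty, digamma_one_half]
    ring
  | succ n ih =>
    have hpos : (0 : ℝ) < n + 1 / 2 := by positivity
    have hx : ∀ m : ℕ, (n : ℝ) + 1 / 2 ≠ -m := fun m h => by
      linarith [(m.cast_nonneg : (0 : ℝ) ≤ m)]
    rw [Nat.cast_succ, add_right_comm, digamma_add_one hx, ih, Finset.sum_range_succ]
    field_simp
    ring

theorem integral_chebyshevU_sq (n : ℕ) :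
    (∫ x in (0 : ℝ)..1, ((Polynomial.Chebyshev.U ℝ n).eval x) ^ 2)
        = ∑ k ∈ Finset.range (n + 1), 1 / (2 * (k : ℝ) + 1) ∧
    (∫ x in (0 : ℝ)..1, ((Polynomial.Chebyshev.U ℝ n).eval x) ^ 2)
        = (1 / 2) * (digamma ((n : ℝ) + 3 / 2) + Real.eulerMascheroniConstant + Real.log 4) := by
  have hψ := digamma_nat_add_one_half (n + 1)
  rw [Nat.cast_succ, add_assoc, show (1 : ℝ) + 1 / 2 = 3 / 2 by norm_num] at hψ
  rw [Chebyshev.integral_eval_U_sq, hψ]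
  constructor <;> ring
end

section
/- For all real x and n ∈ ℕ, ((n+1)²/4)·U_{n+1}(x)² − ∑_{k=0}^{n} (k+1)·U_k(x)² = (x² − 1)·C^{(2)}_n(x)². -/
open Polynomial

/-- The Gegenbauer polynomial of index 2, defined by `2 C²ₙ(x) = d/dx U_{n+1}(x)`. -/
noncomputable def gegenbauer2 (n : ℕ) : Polynomial ℝ :=
  Polynomial.C (1 / 2 : ℝ) * Polynomial.derivative (Polynomial.Chebyshev.U ℝ (n + 1))

/-!
Writing `Dₙ = (X² - 1) U'ₙ`, the classical relations
`Dₙ = (n + 1) Uₙ₊₁ - (n + 2) X Uₙ = n X Uₙ - (n + 1) Uₙ₋₁` give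
`Dₙ₊₁² - Dₙ² = (X² - 1) ((n + 1)² Uₙ₊₁² - (n + 2)² Uₙ²)`.
Cancelling the monic factor `X² - 1` and telescoping over `n`, using
`(k + 2)² - k² = 4 (k + 1)`, gives the identity in `R[X]` over any commutative ring `R`.
-/

namespace Polynomial.Chebyshev

variable {R : Type*} [CommRing R]

theorem monic_X_sq_sub_one : (X ^ 2 - 1 : R[X]).Monic := by
  simpa using monic_X_pow_sub_C (1 : R) two_ne_zero

theorem X_sq_sub_one_mul_derivative_U (n : ℤ) :
    (X ^ 2 - 1) * derivative (U R n)
      = ((n : R[X]) + 1) * U R (n + 1) - ((n : R[X]) + 2) * X * U R n := by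
  have hT := T_eq_U_sub_X_mul_U R (n + 1)
  rw [add_sub_cancel_right] at hT
  linear_combination -add_one_mul_T_eq_poly_in_U (R := R) n + ((n : R[X]) + 1) * hT

theorem X_sq_sub_one_mul_derivative_U_add_one (n : ℤ) :
    (X ^ 2 - 1) * derivative (U R (n + 1))
      = ((n : R[X]) + 1) * X * U R (n + 1) - ((n : R[X]) + 2) * U R n := by
  have h := X_sq_sub_one_mul_derivative_U (R := R) (n + 1)
  rw [add_assoc, one_add_one_eq_two, U_add_two] at h
  push_cast at h
  linear_combination h

theorem X_sq_sub_one_mul_sq_derivative_U_add_one_sub (n : ℤ) :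
    (X ^ 2 - 1) * (derivative (U R (n + 1)) ^ 2 - derivative (U R n) ^ 2)
      = ((n : R[X]) + 1) ^ 2 * U R (n + 1) ^ 2 - ((n : R[X]) + 2) ^ 2 * U R n ^ 2 := by
  refine monic_X_sq_sub_one.isRegular.left ?_
  calc (X ^ 2 - 1) * ((X ^ 2 - 1) * (derivative (U R (n + 1)) ^ 2 - derivative (U R n) ^ 2))
      = ((X ^ 2 - 1) * derivative (U R (n + 1))) ^ 2 - ((X ^ 2 - 1) * derivative (U R n)) ^ 2 := by
        ring
    _ = (((n : R[X]) + 1) * X * U R (n + 1) - ((n : R[X]) + 2) * U R n) ^ 2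
          - (((n : R[X]) + 1) * U R (n + 1) - ((n : R[X]) + 2) * X * U R n) ^ 2 := by
        rw [X_sq_sub_one_mul_derivative_U_add_one, X_sq_sub_one_mul_derivative_U]
    _ = (X ^ 2 - 1) * (((n : R[X]) + 1) ^ 2 * U R (n + 1) ^ 2 - ((n : R[X]) + 2) ^ 2 * U R n ^ 2) := by
        ring

theorem sq_mul_sq_U_sub_sum_eq_X_sq_sub_one_mul_sq_derivative_U (n : ℕ) :
    ((n : R[X]) + 1) ^ 2 * U R (n + 1) ^ 2 - 4 * ∑ k ∈ Finset.range (n + 1), ((k : R[X]) + 1) * U R k ^ 2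
      = (X ^ 2 - 1) * derivative (U R (n + 1)) ^ 2 := by
  induction n with
  | zero =>
    simp only [Nat.cast_zero, zero_add, Finset.sum_range_one, U_one, U_zero, derivative_mul,
      derivative_X, derivative_ofNat]
    ring
  | succ n ih =>
    have step := X_sq_sub_one_mul_sq_derivative_U_add_one_sub (R := R) (n + 1)
    rw [Finset.sum_range_succ]
    push_cast at step ⊢
    linear_combination ih - step

end Polynomial.Chebyshev

theorem dette_identity (n : ℕ) (x : ℝ) :
    (((n : ℝ) + 1) ^ 2 / 4) * ((Polynomial.Chebyshev.U ℝ (n + 1)).eval x) ^ 2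
        - ∑ k ∈ Finset.range (n + 1), ((k : ℝ) + 1) * ((Polynomial.Chebyshev.U ℝ k).eval x) ^ 2
      = (x ^ 2 - 1) * ((gegenbauer2 n).eval x) ^ 2 := by
  have h := congrArg (eval x)
    (Chebyshev.sq_mul_sq_U_sub_sum_eq_X_sq_sub_one_mul_sq_derivative_U (R := ℝ) n)
  simp only [eval_sub, eval_mul, eval_pow, eval_add, eval_natCast, eval_ofNat, eval_X, eval_one,
    eval_finsetSum] at h
  simp only [gegenbauer2, eval_mul, eval_C]
  linear_combination h / 4
end

section
/- Let n ∈ ℕ and numbers c_{j,k} for j,k ∈ {0,…,n} satisfy: (1) c_{j,k} = c_{j+r,k+r} whenever j+k = n−r with r ∈ {1,…,n}; (2) c_{j,k} = c_{n−j,k} for j ≥ k; (3) c_{j,k} = c_{k,j}. Then for any function f : ℕ → ℝ, ∑_{j,k=0}^{n} c_{j,k}·f(|j−k|) = ∑_{j,k=0}^{n} c_{j,k}·f(|n−j−k|) = f(0)·∑_{u=0}^{n} c_{u,u} + 2∑_{r=1}^{n} f(r)·∑_{u=0}^{n−r} c_{r+u,u}. -/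
/-!
Reflecting the inner index `k ↦ n - k` turns `|j - k|` into `|n - j - k|`, and it leaves `c j k`
unchanged because symmetry lets the reflection `(2)` in the larger index act on either index.
For the second identity, split the square into the diagonal and the two triangles, and group
the off-diagonal terms by the difference `r = |j - k|`; symmetry identifies the two triangles.
-/

open Finset

section TriangleSums

variable {M : Type*} [AddCommMonoid M]

theorem sum_filter_snd_lt_fst_range_product (n : ℕ) (F : ℕ → ℕ → M) :
    ∑ p ∈ (range (n + 1) ×ˢ range (n + 1)).filter (fun p => p.2 < p.1), F p.1 p.2
      = ∑ r ∈ Icc 1 n, ∑ u ∈ range (n - r + 1), F (r + u) u := by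
  rw [sum_sigma']
  refine sum_nbij' (fun p => ⟨p.1 - p.2, p.2⟩) (fun x => (x.1 + x.2, x.2)) ?_ ?_ ?_ ?_ ?_ <;>
    simp +contextual only [mem_filter, mem_product, mem_range, mem_sigma, mem_Icc,
      Prod.ext_iff, Sigma.ext_iff, heq_eq_eq] <;> grind

theorem sum_range_sum_range_eq_diag_add_offDiag (n : ℕ) (F : ℕ → ℕ → M) :
    ∑ j ∈ range (n + 1), ∑ k ∈ range (n + 1), F j k
      = ∑ u ∈ range (n + 1), F u u
        + ∑ r ∈ Icc 1 n, ∑ u ∈ range (n - r + 1), (F (r + u) u + F u (r + u)) := by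
  have trichotomy : ∀ p : ℕ × ℕ, F p.1 p.2 = (if p.1 = p.2 then F p.1 p.2 else 0)
      + ((if p.2 < p.1 then F p.1 p.2 else 0) + if p.1 < p.2 then F p.1 p.2 else 0) := by
    intro p
    split_ifs <;> first | (exfalso; omega) | simp
  have upper : ∑ p ∈ (range (n + 1) ×ˢ range (n + 1)).filter (fun p => p.1 < p.2), F p.1 p.2
      = ∑ r ∈ Icc 1 n, ∑ u ∈ range (n - r + 1), F u (r + u) := by
    rw [← sum_filter_snd_lt_fst_range_product n (fun j k => F k j)]
    refine sum_nbij' Prod.swap Prod.swap ?_ ?_ ?_ ?_ ?_ <;> simp +contextual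
  rw [← sum_product', sum_congr rfl fun p _ => trichotomy p, sum_add_distrib, sum_add_distrib,
    ← sum_filter, ← sum_filter, ← sum_filter, ← diag_eq_filter, sum_diag,
    sum_filter_snd_lt_fst_range_product, upper]
  simp only [sum_add_distrib]

end TriangleSums

theorem apply_sub_right_of_symm_of_apply_sub_left {α : Type*} {n : ℕ} {c : ℕ → ℕ → α}
    (hreflect : ∀ j k : ℕ, j ≤ n → k ≤ n → k ≤ j → c j k = c (n - j) k)
    (hsymm : ∀ j k : ℕ, c j k = c k j) {j k : ℕ} (hj : j ≤ n) (hk : k ≤ n) :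
    c j (n - k) = c j k := by
  have of_le : ∀ j k, j ≤ k → k ≤ n → c j (n - k) = c j k := fun j k hjk hk => by
    rw [hsymm j, hsymm j k, hreflect k j hk (hjk.trans hk) hjk]
  rcases le_total j k with hjk | hkj
  · exact of_le j k hjk hk
  rcases le_total j (n - k) with hj' | hj'
  · simpa only [Nat.sub_sub_self hk, eq_comm] using of_le j (n - k) hj' (Nat.sub_le n k)
  · rw [hreflect j (n - k) hj (Nat.sub_le n k) hj', hreflect j k hj hk hkj,
      of_le (n - j) k (by omega) hk]

theorem permutation_lemma_general (n : ℕ) (c : ℕ → ℕ → ℝ)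
    (h2 : ∀ j k : ℕ, j ≤ n → k ≤ n → k ≤ j → c j k = c (n - j) k)
    (h3 : ∀ j k : ℕ, c j k = c k j)
    (f : ℕ → ℝ) :
    (∑ j ∈ Finset.range (n + 1), ∑ k ∈ Finset.range (n + 1),
        c j k * f ((j : ℤ) - k).natAbs
      = ∑ j ∈ Finset.range (n + 1), ∑ k ∈ Finset.range (n + 1),
        c j k * f ((n : ℤ) - j - k).natAbs) ∧
    (∑ j ∈ Finset.range (n + 1), ∑ k ∈ Finset.range (n + 1),
        c j k * f ((j : ℤ) - k).natAbs
      = f 0 * ∑ u ∈ Finset.range (n + 1), c u u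
        + 2 * ∑ r ∈ Finset.Icc 1 n, f r * ∑ u ∈ Finset.range (n - r + 1), c (r + u) u) := by
  constructor
  · refine sum_congr rfl fun j hj => ?_
    rw [← sum_range_reflect _ (n + 1)]
    refine sum_congr rfl fun k hk => ?_
    rw [mem_range] at hj hk
    rw [Nat.add_sub_cancel, apply_sub_right_of_symm_of_apply_sub_left h2 h3 (by omega) (by omega)]
    congr 2
    omega
  · rw [sum_range_sum_range_eq_diag_add_offDiag, mul_sum, mul_sum]
    congr 1
    · simp only [sub_self, Int.natAbs_zero, mul_comm]
    · refine sum_congr rfl fun r _ => ?_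
      rw [mul_sum, mul_sum]
      refine sum_congr rfl fun u _ => ?_
      rw [h3 u, show ((r + u : ℕ) : ℤ) - u = r by push_cast; ring,
        show (u : ℤ) - (r + u : ℕ) = -r by push_cast; ring]
      simp only [Int.natAbs_neg, Int.natAbs_natCast]
      ring

theorem permutation_lemma (n : ℕ) (c : ℕ → ℕ → ℝ)
    (h1 : ∀ j k r : ℕ, 1 ≤ r → r ≤ n → j + k = n - r → c j k = c (j + r) (k + r))
    (h2 : ∀ j k : ℕ, j ≤ n → k ≤ n → k ≤ j → c j k = c (n - j) k)
    (h3 : ∀ j k : ℕ, c j k = c k j)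
    (f : ℕ → ℝ) :
    (∑ j ∈ Finset.range (n + 1), ∑ k ∈ Finset.range (n + 1),
        c j k * f ((j : ℤ) - k).natAbs
      = ∑ j ∈ Finset.range (n + 1), ∑ k ∈ Finset.range (n + 1),
        c j k * f ((n : ℤ) - j - k).natAbs) ∧
    (∑ j ∈ Finset.range (n + 1), ∑ k ∈ Finset.range (n + 1),
        c j k * f ((j : ℤ) - k).natAbs
      = f 0 * ∑ u ∈ Finset.range (n + 1), c u u
        + 2 * ∑ r ∈ Finset.Icc 1 n, f r * ∑ u ∈ Finset.range (n - r + 1), c (r + u) u) :=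
  permutation_lemma_general n c h2 h3 f
end

section
/- For every L ∈ ℕ, ∫_{−1}^{1} [C^{(2)}_{2L}(x)]²·√(1−x)·(1+x)^{3/2} dx = (π/2)·binom(2L+3, 2L). -/
open Polynomial Real MeasureTheory


lemma deriv_U_step (n : ℤ) :
    derivative (Chebyshev.U ℝ (n + 2)) =
      derivative (Chebyshev.U ℝ n) + (2 * (n : ℝ[X]) + 4) * Chebyshev.U ℝ (n + 1) := by
  have h2 := congr_arg derivative (Chebyshev.U_eq_X_mul_U_add_T ℝ (n + 1))
  have h3 := congr_arg derivative (Chebyshev.U_add_two ℝ n)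
  have hT := Chebyshev.T_derivative_eq_U (R := ℝ) (n + 2)
  rw [show (n:ℤ)+1+1 = n+2 from by ring] at h2
  rw [show (n:ℤ)+2-1 = n+1 from by ring] at hT
  simp only [derivative_add, derivative_sub, derivative_mul, derivative_X, derivative_ofNat,
    one_mul, hT] at h2 h3
  push_cast at h2 h3 ⊢
  linear_combination 2 * h2 - h3

lemma deriv_U_odd (L : ℕ) :
    derivative (Chebyshev.U ℝ (2 * L + 1)) =
      ∑ j ∈ Finset.range (L + 1), ((4 * (j:ℝ[X]) + 2)) * Chebyshev.U ℝ (2 * j) := by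
  induction L with
  | zero => simp [Chebyshev.U_one]
  | succ L ih =>
    rw [Finset.sum_range_succ, ← ih]
    have h := deriv_U_step (2 * L + 1)
    rw [show (2*(L:ℤ)+1+2) = 2*(L+1:ℕ)+1 from by push_cast; ring,
        show (2*(L:ℤ)+1+1) = 2*((L:ℕ)+1) from by push_cast; ring] at h
    rw [h]
    push_cast
    ring


lemma integral_cos_int (k : ℤ) :
    (∫ θ in (0:ℝ)..π, Real.cos ((k:ℝ) * θ)) = if k = 0 then π else 0 := by
  rcases eq_or_ne k 0 with h | h
  · simp [h]
  · have hk : (k : ℝ) ≠ 0 := Int.cast_ne_zero.2 h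
    have h2 := intervalIntegral.mul_integral_comp_mul_left (a := (0:ℝ)) (b := π)
      (f := Real.cos) (c := (k:ℝ))
    rw [integral_cos] at h2
    simp only [mul_zero, Real.sin_zero, Real.sin_int_mul_pi, sub_zero] at h2
    rw [if_neg h]
    rcases mul_eq_zero.1 h2 with h3 | h3
    · exact absurd h3 hk
    · exact h3

lemma key (i j : ℕ) :
    (∫ θ in (0:ℝ)..π,
        Real.sin ((2*i+1) * θ) * Real.sin ((2*j+1) * θ) * (1 + Real.cos θ))
      = if i = j then π / 2 else 0 := by
  have hident : ∀ θ : ℝ,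
      Real.sin ((2*i+1) * θ) * Real.sin ((2*j+1) * θ) * (1 + Real.cos θ)
        = 1/2 * Real.cos (((2*(i:ℤ) - 2*j : ℤ) : ℝ) * θ)
          - 1/2 * Real.cos (((2*(i:ℤ) + 2*j + 2 : ℤ) : ℝ) * θ)
          + 1/4 * Real.cos (((2*(i:ℤ) - 2*j + 1 : ℤ) : ℝ) * θ)
          + 1/4 * Real.cos (((2*(i:ℤ) - 2*j - 1 : ℤ) : ℝ) * θ)
          - 1/4 * Real.cos (((2*(i:ℤ) + 2*j + 3 : ℤ) : ℝ) * θ)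
          - 1/4 * Real.cos (((2*(i:ℤ) + 2*j + 1 : ℤ) : ℝ) * θ) := by
    intro θ
    push_cast
    rw [show (2*(i:ℝ) - 2*j) * θ = (2*i+1)*θ - (2*j+1)*θ by ring,
        show (2*(i:ℝ) + 2*j + 2) * θ = (2*i+1)*θ + (2*j+1)*θ by ring,
        show (2*(i:ℝ) - 2*j + 1) * θ = ((2*i+1)*θ - (2*j+1)*θ) + θ by ring,
        show (2*(i:ℝ) - 2*j - 1) * θ = ((2*i+1)*θ - (2*j+1)*θ) - θ by ring,
        show (2*(i:ℝ) + 2*j + 3) * θ = ((2*i+1)*θ + (2*j+1)*θ) + θ by ring,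
        show (2*(i:ℝ) + 2*j + 1) * θ = ((2*i+1)*θ + (2*j+1)*θ) - θ by ring]
    simp only [Real.cos_add, Real.cos_sub, Real.sin_add, Real.sin_sub]
    ring
  rw [intervalIntegral.integral_congr (g := fun θ =>
      1/2 * Real.cos (((2*(i:ℤ) - 2*j : ℤ) : ℝ) * θ)
        - 1/2 * Real.cos (((2*(i:ℤ) + 2*j + 2 : ℤ) : ℝ) * θ)
        + 1/4 * Real.cos (((2*(i:ℤ) - 2*j + 1 : ℤ) : ℝ) * θ)
        + 1/4 * Real.cos (((2*(i:ℤ) - 2*j - 1 : ℤ) : ℝ) * θ)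
        - 1/4 * Real.cos (((2*(i:ℤ) + 2*j + 3 : ℤ) : ℝ) * θ)
        - 1/4 * Real.cos (((2*(i:ℤ) + 2*j + 1 : ℤ) : ℝ) * θ))
      (fun θ _ => hident θ)]
  have ic : ∀ (c : ℝ) (k : ℤ), IntervalIntegrable
      (fun θ => c * Real.cos ((k:ℝ) * θ)) volume 0 π :=
    fun c k => (Continuous.mul continuous_const
      (Real.continuous_cos.comp (continuous_const.mul continuous_id))).intervalIntegrable 0 π
  rw [intervalIntegral.integral_sub (((((ic _ _).sub (ic _ _)).add (ic _ _)).add (ic _ _)).sub (ic _ _)) (ic _ _),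
      intervalIntegral.integral_sub ((((ic _ _).sub (ic _ _)).add (ic _ _)).add (ic _ _)) (ic _ _),
      intervalIntegral.integral_add (((ic _ _).sub (ic _ _)).add (ic _ _)) (ic _ _),
      intervalIntegral.integral_add ((ic _ _).sub (ic _ _)) (ic _ _),
      intervalIntegral.integral_sub (ic _ _) (ic _ _)]
  simp only [intervalIntegral.integral_const_mul, integral_cos_int]
  rcases eq_or_ne i j with h | h
  · subst h
    have h0 : (2*(i:ℤ) - 2*i : ℤ) = 0 := by ring
    rw [if_pos h0]
    rw [if_neg (by omega), if_neg (by omega), if_neg (by omega), if_neg (by omega),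
        if_neg (by omega), if_pos rfl]
    ring
  · rw [if_neg (by omega), if_neg (by omega), if_neg (by omega), if_neg (by omega),
        if_neg (by omega), if_neg (by omega), if_neg h]
    ring

lemma eval_gegen (L : ℕ) (θ : ℝ) :
    (gegenbauer2 (2*L)).eval (Real.cos θ) * Real.sin θ
      = ∑ j ∈ Finset.range (L+1), (2*(j:ℝ)+1) * Real.sin ((2*j+1) * θ) := by
  have hU : ∀ j : ℕ, (Chebyshev.U ℝ (2*(j:ℤ))).eval (Real.cos θ) * Real.sin θ
      = Real.sin ((2*(j:ℝ)+1) * θ) := by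
    intro j
    have h := Chebyshev.U_real_cos θ (2*(j:ℤ))
    push_cast at h
    exact h
  have hL : ((2*L : ℕ) : ℤ) + 1 = 2 * (L:ℤ) + 1 := by push_cast; ring
  simp only [gegenbauer2, hL, deriv_U_odd, eval_mul, eval_C, eval_finset_sum, eval_add,
    eval_natCast, eval_ofNat]
  rw [mul_assoc, Finset.sum_mul, Finset.mul_sum]
  refine Finset.sum_congr rfl fun j _ => ?_
  have := hU j
  push_cast at this
  linear_combination (2*(j:ℝ)+1) * this

theorem integral_gegenbauer2_jacobi (L : ℕ) :
    (∫ x in (-1 : ℝ)..1,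
        ((gegenbauer2 (2 * L)).eval x) ^ 2 * Real.sqrt (1 - x) * (1 + x) ^ (3 / 2 : ℝ))
      = (π / 2) * (Nat.choose (2 * L + 3) (2 * L) : ℝ) := by
  set P := gegenbauer2 (2 * L) with hP
  set F : ℝ → ℝ := fun x => (P.eval x) ^ 2 * Real.sqrt (1 - x) * (1 + x) ^ (3 / 2 : ℝ) with hF
  have hFc : Continuous F := by
    apply Continuous.mul
    · exact ((P.continuous_aeval).pow 2).mul (Real.continuous_sqrt.comp (by fun_prop))
    · rw [continuous_iff_continuousAt]
      intro x
      exact (Real.continuousAt_rpow_const _ _ (Or.inr (by norm_num))).comp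
        (by fun_prop : Continuous fun x : ℝ => 1 + x).continuousAt
  -- change of variables
  have hsub : (∫ x in (-1:ℝ)..1, F x) = ∫ θ in (0:ℝ)..π, Real.sin θ * F (Real.cos θ) := by
    have h := intervalIntegral.integral_comp_smul_deriv (a := 0) (b := π)
      (f := Real.cos) (f' := fun θ => -Real.sin θ) (g := F)
      (fun θ _ => Real.hasDerivAt_cos θ) (Real.continuous_sin.neg.continuousOn) hFc
    simp only [Real.cos_zero, Real.cos_pi, smul_eq_mul] at h
    rw [intervalIntegral.integral_symm 1 (-1), ← h, ← intervalIntegral.integral_neg]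
    congr 1 with θ
    simp only [Function.comp_apply]
    ring
  rw [hsub]
  -- rewrite integrand on [0, π]
  have hcongr : (∫ θ in (0:ℝ)..π, Real.sin θ * F (Real.cos θ))
      = ∫ θ in (0:ℝ)..π,
          (∑ j ∈ Finset.range (L+1), (2*(j:ℝ)+1) * Real.sin ((2*j+1) * θ)) ^ 2
            * (1 + Real.cos θ) := by
    apply intervalIntegral.integral_congr
    intro θ hθ
    rw [Set.uIcc_of_le Real.pi_nonneg] at hθ
    have hs : 0 ≤ Real.sin θ := Real.sin_nonneg_of_nonneg_of_le_pi hθ.1 hθ.2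
    have h1 : 0 ≤ 1 - Real.cos θ := by nlinarith [Real.cos_le_one θ]
    have h2 : 0 ≤ 1 + Real.cos θ := by nlinarith [Real.neg_one_le_cos θ]
    show Real.sin θ * F (Real.cos θ)
      = (∑ j ∈ Finset.range (L+1), (2*(j:ℝ)+1) * Real.sin ((2*j+1) * θ)) ^ 2
          * (1 + Real.cos θ)
    have hE := eval_gegen L θ
    rw [← hP] at hE
    rw [← hE]
    simp only [hF]
    have hrw : (1 + Real.cos θ) ^ (3/2 : ℝ) = (1 + Real.cos θ) * Real.sqrt (1 + Real.cos θ) := by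
      rw [show (3/2 : ℝ) = 1 + 1/2 by norm_num, Real.rpow_add' h2 (by norm_num),
        Real.rpow_one, ← Real.sqrt_eq_rpow]
    have hss : Real.sqrt (1 - Real.cos θ) * Real.sqrt (1 + Real.cos θ) = Real.sin θ := by
      rw [← Real.sqrt_mul h1]
      rw [show (1 - Real.cos θ) * (1 + Real.cos θ) = Real.sin θ ^ 2 by
        nlinarith [Real.sin_sq_add_cos_sq θ]]
      exact Real.sqrt_sq hs
    rw [hrw]
    linear_combination (eval (Real.cos θ) P)^2 * (1 + Real.cos θ) * Real.sin θ * hss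
  rw [hcongr]
  -- expand the square and integrate term by term
  have hexp : (∫ θ in (0:ℝ)..π,
      (∑ j ∈ Finset.range (L+1), (2*(j:ℝ)+1) * Real.sin ((2*j+1) * θ)) ^ 2
        * (1 + Real.cos θ))
      = ∑ i ∈ Finset.range (L+1), ∑ j ∈ Finset.range (L+1),
          (2*(i:ℝ)+1) * (2*(j:ℝ)+1) *
            ∫ θ in (0:ℝ)..π,
              Real.sin ((2*i+1) * θ) * Real.sin ((2*j+1) * θ) * (1 + Real.cos θ) := by
    rw [intervalIntegral.integral_congr (g := fun θ =>
        ∑ i ∈ Finset.range (L+1), ∑ j ∈ Finset.range (L+1),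
          (2*(i:ℝ)+1) * (2*(j:ℝ)+1) *
            (Real.sin ((2*i+1) * θ) * Real.sin ((2*j+1) * θ) * (1 + Real.cos θ)))
      (fun θ _ => by
        rw [sq, Finset.sum_mul_sum, Finset.sum_mul]
        rw [Finset.sum_congr rfl fun i _ => (Finset.sum_mul _ _ _)]
        exact Finset.sum_congr rfl fun i _ => Finset.sum_congr rfl fun j _ => by ring)]
    rw [intervalIntegral.integral_finset_sum (fun i _ =>
      (Continuous.intervalIntegrable (continuous_finset_sum _ fun j _ => by fun_prop) _ _))]
    exact Finset.sum_congr rfl fun i _ => by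
      rw [intervalIntegral.integral_finset_sum (fun j _ =>
        (Continuous.intervalIntegrable (by fun_prop) _ _))]
      exact Finset.sum_congr rfl fun j _ =>
        (intervalIntegral.integral_const_mul _ _)
  rw [hexp]
  simp only [key]
  -- collapse the double sum
  have hdiag : ∀ i ∈ Finset.range (L+1),
      (∑ j ∈ Finset.range (L+1), (2*(i:ℝ)+1) * (2*(j:ℝ)+1) * (if i = j then π/2 else 0))
        = ((2*(i:ℝ)+1)^2) * (π/2) := by
    intro i hi
    rw [Finset.sum_eq_single i]
    · rw [if_pos rfl]; ring
    · intro j _ hj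
      simp [Ne.symm hj]
    · intro h; exact absurd hi h
  rw [Finset.sum_congr rfl hdiag]
  -- final arithmetic
  have hsum : ∀ M : ℕ, (∑ i ∈ Finset.range (M+1), ((2*(i:ℝ)+1)^2))
      = ((2*(M:ℝ)+1)*(2*M+2)*(2*M+3))/6 := by
    intro M
    induction M with
    | zero => norm_num
    | succ M ih =>
      rw [Finset.sum_range_succ, ih]
      push_cast
      field_simp
      ring
  rw [← Finset.sum_mul, hsum]
  have hch : (6 : ℕ) * Nat.choose (2*L+3) (2*L) = (2*L+3)*(2*L+2)*(2*L+1) := by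
    have h1 : Nat.choose (2*L+3) (2*L) = Nat.choose (2*L+3) 3 := by
      rw [← Nat.choose_symm (by omega : 2*L ≤ 2*L+3)]
      congr 1
      omega
    have h2 := Nat.descFactorial_eq_factorial_mul_choose (2*L+3) 3
    have h3 : (2*L+3).descFactorial 3 = (2*L+1) * ((2*L+2) * (2*L+3)) := by
      simp only [Nat.descFactorial_succ, Nat.descFactorial_zero, Nat.mul_one, Nat.sub_zero]
      rw [show 2*L+3-2 = 2*L+1 from by omega, show 2*L+3-1 = 2*L+2 from by omega]
    rw [show Nat.factorial 3 = 6 from by norm_num [Nat.factorial], h3] at h2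
    rw [h1, ← h2]
    ring
  have hch' : (Nat.choose (2*L+3) (2*L) : ℝ) = ((2*L+3)*(2*L+2)*(2*L+1) : ℝ)/6 := by
    have := congrArg (fun n : ℕ => (n : ℝ)) hch
    push_cast at this
    linarith
  rw [hch']
  ring
end

section
/- As t → 0⁺, ∑_{ℓ=1}^∞ e^{−ℓ(ℓ+1)t}·(2ℓ+1)²/(ℓ(ℓ+1)) = 2√(π/t) + O(1). -/
/-!
Splitting `(2ℓ+1)²/(ℓ(ℓ+1)) = 4 + 1/(ℓ(ℓ+1))` writes the series as `4 E(t) + B(t)`, where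
`E(t) = ∑_{ℓ≥1} e^{-ℓ(ℓ+1)t}` and `0 ≤ B(t) ≤ ∑ 1/(ℓ(ℓ+1)) = 1`. Since
`e^{-t(ℓ+1)²} ≤ e^{-ℓ(ℓ+1)t} ≤ e^{-tℓ²}`, the integral test for the decreasing Gaussian
`x ↦ e^{-tx²}` squeezes `E(t)` between `∫₀^∞ e^{-tx²} dx - 2` and `∫₀^∞ e^{-tx²} dx = √(π/t)/2`.
-/

open Real Filter Asymptotics MeasureTheory Set

theorem sum_range_one_div_succ_mul_succ_succ (N : ℕ) :
    ∑ n ∈ Finset.range N, 1 / (((n : ℝ) + 1) * ((n : ℝ) + 2)) = 1 - 1 / ((N : ℝ) + 1) := by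
  induction N with
  | zero => simp
  | succ N ih =>
    rw [Finset.sum_range_succ, ih]
    push_cast
    field_simp
    ring

theorem hasSum_one_div_succ_mul_succ_succ :
    HasSum (fun n : ℕ => 1 / (((n : ℝ) + 1) * ((n : ℝ) + 2))) 1 := by
  rw [hasSum_iff_tendsto_nat_of_nonneg (fun n => by positivity)]
  simp_rw [sum_range_one_div_succ_mul_succ_succ]
  simpa using (tendsto_one_div_add_atTop_nhds_zero_nat (𝕜 := ℝ)).const_sub 1

namespace AntitoneOn

variable {f : ℝ → ℝ} {a : ℕ → ℝ}

theorem summable_of_le_comp_succ (anti : AntitoneOn f (Ici 0))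
    (integrable : IntegrableOn f (Ioi 0)) (nonneg : ∀ x ∈ Ioi 0, 0 ≤ f x)
    (ha_nonneg : ∀ n : ℕ, 0 ≤ a n) (ha : ∀ n : ℕ, a n ≤ f ((n : ℝ) + 1)) : Summable a := by
  refine Summable.of_nonneg_of_le ha_nonneg ha ?_
  exact_mod_cast (summable_nat_add_iff 1).2
    (anti.summable_of_integrableOn_Ioi_zero integrable nonneg)

theorem tsum_le_integral_of_le_comp_succ (anti : AntitoneOn f (Ici 0))
    (integrable : IntegrableOn f (Ioi 0)) (nonneg : ∀ x ∈ Ioi 0, 0 ≤ f x)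
    (ha_nonneg : ∀ n : ℕ, 0 ≤ a n) (ha : ∀ n : ℕ, a n ≤ f ((n : ℝ) + 1)) :
    ∑' n, a n ≤ ∫ x in Ioi 0, f x := by
  calc ∑' n, a n ≤ ∑' n : ℕ, f ((n + 1 : ℕ) : ℝ) := by
        refine Summable.tsum_le_tsum (fun n => by exact_mod_cast ha n)
          (anti.summable_of_le_comp_succ integrable nonneg ha_nonneg ha) ?_
        exact_mod_cast (summable_nat_add_iff 1).2
          (anti.summable_of_integrableOn_Ioi_zero integrable nonneg)
    _ ≤ ∫ x in Ioi 0, f x := anti.tsum_add_one_le_integral integrable nonneg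

theorem integral_sub_le_tsum_of_comp_add_two_le (anti : AntitoneOn f (Ici 0))
    (integrable : IntegrableOn f (Ioi 0)) (nonneg : ∀ x ∈ Ioi 0, 0 ≤ f x)
    (ha_lower : ∀ n : ℕ, f ((n : ℝ) + 2) ≤ a n) (ha : ∀ n : ℕ, a n ≤ f ((n : ℝ) + 1)) :
    (∫ x in Ioi 0, f x) - f 0 - f 1 ≤ ∑' n, a n := by
  rw [sub_sub, sub_le_iff_le_add']
  have hf := anti.summable_of_integrableOn_Ioi_zero integrable nonneg
  have ha_nonneg (n : ℕ) : 0 ≤ a n := (nonneg _ (mem_Ioi.2 (by positivity))).trans (ha_lower n)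
  calc ∫ x in Ioi 0, f x ≤ ∑' n : ℕ, f n := anti.integral_le_tsum hf nonneg
    _ = f 0 + f 1 + ∑' n : ℕ, f ((n + 2 : ℕ) : ℝ) := by
        rw [← hf.sum_add_tsum_nat_add 2]
        simp [Finset.sum_range_succ]
    _ ≤ f 0 + f 1 + ∑' n, a n := by
        refine (add_le_add_iff_left _).2 (Summable.tsum_le_tsum
          (fun n => by exact_mod_cast ha_lower n) ((summable_nat_add_iff 2).2 hf)
          (anti.summable_of_le_comp_succ integrable nonneg ha_nonneg ha))

end AntitoneOn

theorem antitoneOn_exp_neg_mul_sq {t : ℝ} (ht : 0 ≤ t) :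
    AntitoneOn (fun x : ℝ => exp (-t * x ^ 2)) (Ici 0) := by
  intro x hx y _ hxy
  simp only [exp_le_exp, neg_mul, neg_le_neg_iff]
  gcongr

section HeatSum

variable {t : ℝ}

theorem exp_neg_succ_mul_succ_succ_le (ht : 0 ≤ t) (n : ℕ) :
    exp (-((n : ℝ) + 1) * ((n : ℝ) + 2) * t) ≤ exp (-t * ((n : ℝ) + 1) ^ 2) := by
  rw [exp_le_exp]
  nlinarith

theorem exp_neg_mul_add_two_sq_le (ht : 0 ≤ t) (n : ℕ) :
    exp (-t * ((n : ℝ) + 2) ^ 2) ≤ exp (-((n : ℝ) + 1) * ((n : ℝ) + 2) * t) := by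
  rw [exp_le_exp]
  nlinarith

theorem exp_neg_succ_mul_succ_succ_div_le (ht : 0 ≤ t) (n : ℕ) :
    exp (-((n : ℝ) + 1) * ((n : ℝ) + 2) * t) / (((n : ℝ) + 1) * ((n : ℝ) + 2))
      ≤ 1 / (((n : ℝ) + 1) * ((n : ℝ) + 2)) := by
  gcongr
  exact exp_le_one_iff.2 (by rw [neg_mul, neg_mul, neg_nonpos]; positivity)

theorem summable_exp_neg_succ_mul_succ_succ (ht : 0 < t) :
    Summable fun n : ℕ => exp (-((n : ℝ) + 1) * ((n : ℝ) + 2) * t) :=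
  (antitoneOn_exp_neg_mul_sq ht.le).summable_of_le_comp_succ
    (integrable_exp_neg_mul_sq ht).integrableOn (fun _ _ => (exp_pos _).le)
    (fun _ => (exp_pos _).le) (exp_neg_succ_mul_succ_succ_le ht.le)

theorem summable_exp_neg_succ_mul_succ_succ_div (ht : 0 ≤ t) :
    Summable fun n : ℕ =>
      exp (-((n : ℝ) + 1) * ((n : ℝ) + 2) * t) / (((n : ℝ) + 1) * ((n : ℝ) + 2)) :=
  .of_nonneg_of_le (fun _ => by positivity) (exp_neg_succ_mul_succ_succ_div_le ht)
    hasSum_one_div_succ_mul_succ_succ.summable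

theorem tsum_exp_neg_succ_mul_succ_succ_le (ht : 0 < t) :
    ∑' n : ℕ, exp (-((n : ℝ) + 1) * ((n : ℝ) + 2) * t) ≤ √(π / t) / 2 := by
  rw [← integral_gaussian_Ioi]
  exact (antitoneOn_exp_neg_mul_sq ht.le).tsum_le_integral_of_le_comp_succ
    (integrable_exp_neg_mul_sq ht).integrableOn (fun _ _ => (exp_pos _).le)
    (fun _ => (exp_pos _).le) (exp_neg_succ_mul_succ_succ_le ht.le)

theorem sqrt_pi_div_sub_two_le_tsum_exp_neg_succ_mul_succ_succ (ht : 0 < t) :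
    √(π / t) / 2 - 2 ≤ ∑' n : ℕ, exp (-((n : ℝ) + 1) * ((n : ℝ) + 2) * t) := by
  refine le_trans ?_ ((antitoneOn_exp_neg_mul_sq ht.le).integral_sub_le_tsum_of_comp_add_two_le
    (integrable_exp_neg_mul_sq ht).integrableOn (fun _ _ => (exp_pos _).le)
    (exp_neg_mul_add_two_sq_le ht.le) (exp_neg_succ_mul_succ_succ_le ht.le))
  have : exp (-t) ≤ 1 := exp_le_one_iff.2 (by linarith)
  rw [integral_gaussian_Ioi]
  norm_num
  linarith

theorem tsum_exp_neg_succ_mul_succ_succ_div_le_one (ht : 0 ≤ t) :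
    ∑' n : ℕ, exp (-((n : ℝ) + 1) * ((n : ℝ) + 2) * t) / (((n : ℝ) + 1) * ((n : ℝ) + 2))
      ≤ 1 :=
  hasSum_le (exp_neg_succ_mul_succ_succ_div_le ht)
    (summable_exp_neg_succ_mul_succ_succ_div ht).hasSum hasSum_one_div_succ_mul_succ_succ

theorem tsum_heat_summand_split (ht : 0 < t) :
    ∑' n : ℕ, exp (-((n : ℝ) + 1) * ((n : ℝ) + 2) * t)
        * (2 * ((n : ℝ) + 1) + 1) ^ 2 / (((n : ℝ) + 1) * ((n : ℝ) + 2))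
      = 4 * ∑' n : ℕ, exp (-((n : ℝ) + 1) * ((n : ℝ) + 2) * t)
        + ∑' n : ℕ,
            exp (-((n : ℝ) + 1) * ((n : ℝ) + 2) * t) / (((n : ℝ) + 1) * ((n : ℝ) + 2)) := by
  rw [← tsum_mul_left, ← ((summable_exp_neg_succ_mul_succ_succ ht).mul_left 4).tsum_add
    (summable_exp_neg_succ_mul_succ_succ_div ht.le)]
  refine tsum_congr fun n => ?_
  field_simp
  ring

end HeatSum

theorem heat_kernel_diagonal_asymp :
    (fun t : ℝ =>
        (∑' ℓ : ℕ, Real.exp (-((ℓ : ℝ) + 1) * ((ℓ : ℝ) + 2) * t)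
            * (2 * ((ℓ : ℝ) + 1) + 1) ^ 2 / (((ℓ : ℝ) + 1) * ((ℓ : ℝ) + 2)))
          - 2 * Real.sqrt (π / t))
      =O[nhdsWithin 0 (Set.Ioi 0)] (fun _ : ℝ => (1 : ℝ)) := by
  refine IsBigO.of_bound 8 ?_
  filter_upwards [self_mem_nhdsWithin] with t (ht : 0 < t)
  have hE_le := tsum_exp_neg_succ_mul_succ_succ_le ht
  have hE_ge := sqrt_pi_div_sub_two_le_tsum_exp_neg_succ_mul_succ_succ ht
  have hB_le := tsum_exp_neg_succ_mul_succ_succ_div_le_one ht.le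
  have hB_nonneg : 0 ≤ ∑' n : ℕ, exp (-((n : ℝ) + 1) * ((n : ℝ) + 2) * t)
      / (((n : ℝ) + 1) * ((n : ℝ) + 2)) := tsum_nonneg fun n => by positivity
  rw [tsum_heat_summand_split ht, norm_one, mul_one, Real.norm_eq_abs, abs_le]
  constructor <;> linarith
end
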